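/- In the group G = GL_2(W) ⋊ C₂, the subgroup generated by ω² and ωφ has exactly 8 elements and is isomorphic to the quaternion group Q₈ of order 8; explicitly, (ωφ)² = (ω²)² = (−I, 1) is the unique element of order 2, (ω²)⁴ = 1, and (ωφ)·ω²·(ωφ)⁻¹ = (ω²)⁻¹. -/

import Mathlib

/-!
`ω = ι(ω₀) = diag(ω₀, ω₀³)` satisfies `ω⁴ = ι(ω₀⁴) = -I`, and `φ` acts on it by
`φ(ω) = ι(σ ω₀) = ω³`. Hence `A = ω²` and `B = ωφ` satisfy `A⁴ = 1 ≠ A²`,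
`B² = ω φ(ω) = ω⁴ = A²` and `B A B⁻¹ = ω φ(ω²) ω⁻¹ = ω⁶ = A⁻¹`, the defining relations of `Q₈`.
The induced map `Q₈ → ⟨A, B⟩` is injective because `A` has order `4` and `B`, having
nontrivial `C₂`-component, lies outside `⟨A⟩ ⊆ GL₂(W)`; the unique involution of `Q₈` goes to
`A² = -I`.
-/

open Matrix

/-- `𝔽₉`, the field with nine elements. -/
abbrev F9 : Type := GaloisField 3 2

/-- `W = 𝕎(𝔽₉)`, the ring of Witt vectors of `𝔽₉`. -/
abbrev Wq : Type := WittVector 3 F9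

/-- `σ`, the Frobenius automorphism of `W = 𝕎(𝔽₉)`. -/
noncomputable def σW : Wq ≃+* Wq := WittVector.frobeniusEquiv 3 F9

/-- `ι : W → M₂(W)`, `ι(x) = diag(x, σ(x))`. -/
noncomputable def iw (x : Wq) : Matrix (Fin 2) (Fin 2) Wq := !![x, 0; 0, σW x]

/-- `φ`, the ring automorphism of `M₂(W)` applying `σ` to each matrix entry. -/
noncomputable def φM : Matrix (Fin 2) (Fin 2) Wq ≃+* Matrix (Fin 2) (Fin 2) Wq :=
  σW.mapMatrix

/-- The cyclic group of order two. -/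
abbrev C2 : Type := Multiplicative (ZMod 2)

lemma zpow_mul_eq_mul_zpow_neg {G : Type*} [Group G] {A B : G} (hBA : B * A * B⁻¹ = A⁻¹)
    (k : ℤ) : A ^ k * B = B * A ^ (-k) := by
  have h : B * A ^ (-k) * B⁻¹ = A ^ k := by rw [← conj_zpow, hBA, _root_.inv_zpow', neg_neg]
  rw [← h]; group

lemma zpow_val_eq_zpow {G : Type*} [Group G] {A : G} {m : ℕ} [NeZero m] (hA : A ^ m = 1)
    {i : ZMod m} {k : ℤ} (hk : (k : ZMod m) = i) : A ^ (i.val : ℤ) = A ^ k := by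
  rw [← hk, ZMod.val_intCast, ← zpow_eq_zpow_emod' k hA]

namespace QuaternionGroup

variable {n : ℕ} [NeZero n] {G : Type*} [Group G] {A B : G}

lemma eq_a_of_orderOf_eq_two {g : QuaternionGroup n} (hg : orderOf g = 2) : g = a n := by
  rcases g with i | i
  · rw [orderOf_a] at hg
    have hd : Nat.gcd (2 * n) i.val = n := by
      have := Nat.div_mul_cancel (Nat.gcd_dvd_left (2 * n) i.val)
      rw [hg] at this
      omega
    have hi : i.val ≠ 0 := fun h => by
      rw [h, Nat.gcd_zero_right] at hd
      exact NeZero.ne n (by omega)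
    obtain ⟨c, hc⟩ := hd ▸ Nat.gcd_dvd_right (2 * n) i.val
    have hc1 : c = 1 := by
      have hc2 : c < 2 := Nat.lt_of_mul_lt_mul_left (a := n) (by linarith [i.val_lt])
      interval_cases c <;> simp_all
    rw [← ZMod.natCast_zmod_val i, hc, hc1, mul_one]
  · simp at hg

def lift (hA : A ^ (2 * n) = 1) (hB : B ^ 2 = A ^ n) (hBA : B * A * B⁻¹ = A⁻¹) :
    QuaternionGroup n →* G where
  toFun
    | a i => A ^ i.val
    | xa i => B * A ^ i.val
  map_one' := show A ^ (0 : ZMod (2 * n)).val = 1 by simp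
  map_mul' := by
    rintro (i | i) (j | j) <;>
      simp only [a_mul_a, a_mul_xa, xa_mul_a, xa_mul_xa, ← zpow_natCast]
    · rw [zpow_val_eq_zpow hA (k := i.val + j.val) (by simp), _root_.zpow_add]
    · rw [zpow_val_eq_zpow hA (k := -i.val + j.val) (by simp; ring), ← mul_assoc,
        zpow_mul_eq_mul_zpow_neg hBA, _root_.zpow_add, mul_assoc]
    · rw [zpow_val_eq_zpow hA (k := i.val + j.val) (by simp), _root_.zpow_add, mul_assoc]
    · rw [zpow_val_eq_zpow hA (k := n + (-i.val + j.val)) (by simp; ring), _root_.zpow_add,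
        _root_.zpow_add, zpow_natCast, ← hB, mul_assoc B (A ^ (i.val : ℤ)),
        ← mul_assoc (A ^ (i.val : ℤ)), zpow_mul_eq_mul_zpow_neg hBA]
      simp only [sq, mul_assoc]

section lift

variable (hA : A ^ (2 * n) = 1) (hB : B ^ 2 = A ^ n) (hBA : B * A * B⁻¹ = A⁻¹)

lemma lift_a (i : ZMod (2 * n)) : lift hA hB hBA (a i) = A ^ i.val := rfl

lemma lift_xa (i : ZMod (2 * n)) : lift hA hB hBA (xa i) = B * A ^ i.val := rfl

lemma lift_injective (hAord : orderOf A = 2 * n) (hB_notMem : B ∉ Subgroup.zpowers A) :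
    Function.Injective (lift hA hB hBA) := by
  refine (injective_iff_map_eq_one _).mpr ?_
  rintro (i | i) h
  · rw [lift_a, ← orderOf_dvd_iff_pow_eq_one, hAord] at h
    rw [← a_zero, a.injEq, ← ZMod.val_eq_zero]
    exact Nat.eq_zero_of_dvd_of_lt h i.val_lt
  · rw [lift_xa, mul_eq_one_iff_eq_inv] at h
    exact absurd (h ▸ inv_mem (Subgroup.npow_mem_zpowers A i.val)) hB_notMem

lemma range_lift : (lift hA hB hBA).range = Subgroup.closure {A, B} := by
  have hAmem : A ∈ Subgroup.closure {A, B} := Subgroup.subset_closure (by simp)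
  have hBmem : B ∈ Subgroup.closure {A, B} := Subgroup.subset_closure (by simp)
  refine le_antisymm ?_ ((Subgroup.closure_le _).mpr ?_)
  · rintro _ ⟨i | i, rfl⟩
    · exact pow_mem hAmem _
    · exact mul_mem hBmem (pow_mem hAmem _)
  · rintro _ (rfl | rfl)
    · refine ⟨a 1, ?_⟩
      rw [lift_a, ZMod.val_one'' (by have := NeZero.ne n; omega), pow_one]
    · exact ⟨xa 0, by simp [lift_xa]⟩

end lift

noncomputable def closurePairEquiv (hAord : orderOf A = 2 * n) (hB : B ^ 2 = A ^ n)
    (hBA : B * A * B⁻¹ = A⁻¹) (hB_notMem : B ∉ Subgroup.zpowers A) :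
    Subgroup.closure {A, B} ≃* QuaternionGroup n :=
  have hA := hAord ▸ pow_orderOf_eq_one A
  (MulEquiv.subgroupCongr (range_lift hA hB hBA).symm).trans
    (MonoidHom.ofInjective (lift_injective hA hB hBA hAord hB_notMem)).symm

lemma card_closure_pair (hAord : orderOf A = 2 * n) (hB : B ^ 2 = A ^ n)
    (hBA : B * A * B⁻¹ = A⁻¹) (hB_notMem : B ∉ Subgroup.zpowers A) :
    Nat.card (Subgroup.closure {A, B}) = 4 * n := by
  rw [Nat.card_congr (closurePairEquiv hAord hB hBA hB_notMem).toEquiv,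
    Nat.card_eq_fintype_card, card]

lemma eq_pow_of_mem_closure_pair_of_orderOf_eq_two (hAord : orderOf A = 2 * n)
    (hB : B ^ 2 = A ^ n) (hBA : B * A * B⁻¹ = A⁻¹) (hB_notMem : B ∉ Subgroup.zpowers A)
    {g : G} (hg : g ∈ Subgroup.closure {A, B}) (hg2 : orderOf g = 2) : g = A ^ n := by
  have hA := hAord ▸ pow_orderOf_eq_one A
  obtain ⟨y, rfl⟩ := range_lift hA hB hBA ▸ hg
  rw [orderOf_injective _ (lift_injective hA hB hBA hAord hB_notMem)] at hg2
  rw [eq_a_of_orderOf_eq_two hg2, lift_a, ZMod.val_natCast_of_lt (by have := NeZero.ne n; omega)]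

end QuaternionGroup

namespace SemidirectProduct

variable {N H : Type*} [Group N] [Group H] {θ : H →* MulAut N}

lemma inl_mul_inr_sq (u : N) {t : H} (ht : t ^ 2 = 1) :
    (inl u * inr t : N ⋊[θ] H) ^ 2 = inl (u * θ t u) := by
  have htt : t * t = 1 := by rwa [← sq]
  ext <;> simp [sq, htt]

lemma inl_mul_inr_conj_inl (u v : N) (t : H) :
    (inl u * inr t : N ⋊[θ] H) * inl v * (inl u * inr t)⁻¹ = inl (u * θ t v * u⁻¹) := by
  ext <;> simp

lemma inl_mul_inr_notMem_zpowers_inl (u v : N) {t : H} (ht : t ≠ 1) :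
    (inl u * inr t : N ⋊[θ] H) ∉ Subgroup.zpowers (inl v) := by
  have hker : Subgroup.zpowers (inl v) ≤ (rightHom : N ⋊[θ] H →* H).ker :=
    Subgroup.zpowers_le.mpr (rightHom_inl v)
  exact fun h => ht (by simpa using hker h)

end SemidirectProduct

lemma WittVector.neg_one_ne_one {p : ℕ} [Fact p.Prime] {R : Type*} [CommRing R]
    (hR : (-1 : R) ≠ 1) : (-1 : WittVector p R) ≠ 1 := by
  intro h
  have h' := congrArg WittVector.constantCoeff h
  rw [map_neg, map_one] at h'
  exact hR h'

lemma Matrix.GeneralLinearGroup.neg_one_ne_one {n R : Type*} [Fintype n] [DecidableEq n]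
    [Nonempty n] [CommRing R] (hR : (-1 : R) ≠ 1) : (-1 : GL n R) ≠ 1 := by
  obtain ⟨i⟩ := ‹Nonempty n›
  intro h
  exact hR (by simpa using congrArg (fun g : GL n R => (g : Matrix n n R) i i) h)

lemma GL_Wq_neg_one_ne_one : (-1 : GL (Fin 2) Wq) ≠ 1 :=
  have : Fact (2 < 3) := ⟨by norm_num⟩
  GeneralLinearGroup.neg_one_ne_one (WittVector.neg_one_ne_one (CharP.neg_one_ne_one F9 3))

lemma iw_mul (x y : Wq) : iw (x * y) = iw x * iw y := by
  simp [iw]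

lemma iw_pow (x : Wq) (k : ℕ) : iw x ^ k = iw (x ^ k) := by
  induction k with
  | zero => simp [iw, Matrix.one_fin_two]
  | succ k ih => rw [pow_succ, ih, ← iw_mul, pow_succ]

lemma iw_neg_one : iw (-1) = -1 := by
  simp [iw, Matrix.one_fin_two]

lemma φM_iw (x : Wq) : φM (iw x) = iw (σW x) := by
  ext i j
  fin_cases i <;> fin_cases j <;> simp [φM, iw]

section ω

variable {ω₀ : Wq} {ωu : GL (Fin 2) Wq} (hωu : (ωu : Matrix (Fin 2) (Fin 2) Wq) = iw ω₀)
include hωu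

lemma pow_four_eq_neg_one_of_val_eq_iw (hω₀ : ω₀ ^ 4 = -1) : ωu ^ 4 = -1 := Units.ext <| by
  rw [Units.val_pow_eq_pow_val, hωu, iw_pow, hω₀, iw_neg_one, Units.val_neg, Units.val_one]

lemma mapEquiv_φM_of_val_eq_iw (hσω₀ : σW ω₀ = ω₀ ^ 3) :
    Units.mapEquiv φM.toMulEquiv ωu = ωu ^ 3 := Units.ext <| by
  rw [Units.coe_mapEquiv, Units.val_pow_eq_pow_val, hωu, iw_pow, ← hσω₀]
  exact φM_iw ω₀

end ω

/-- in `G = GL₂(W) ⋊ C₂`, the subgroup generated by `ω²` and `ωφ` has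
exactly `8` elements and is isomorphic to the quaternion group `Q₈`; explicitly
`(ωφ)² = (ω²)² = (−I, 1)` is the unique element of order `2`, `(ω²)⁴ = 1`, and
`(ωφ)·ω²·(ωφ)⁻¹ = (ω²)⁻¹`. -/
theorem statement5
    (ω₀ : Wq) (hω₀ : ω₀ ^ 4 = -1) (hσω₀ : σW ω₀ = ω₀ ^ 3)
    (θ : C2 →* MulAut (GL (Fin 2) Wq))
    (hθ : θ (Multiplicative.ofAdd 1) = Units.mapEquiv φM.toMulEquiv)
    (ωu : GL (Fin 2) Wq) (hωu : (ωu : Matrix (Fin 2) (Fin 2) Wq) = iw ω₀)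
    (ωG φG : GL (Fin 2) Wq ⋊[θ] C2)
    (hωG : ωG = SemidirectProduct.inl ωu)
    (hφG : φG = SemidirectProduct.inr (Multiplicative.ofAdd 1)) :
    Nat.card (Subgroup.closure {ωG ^ 2, ωG * φG}) = 8 ∧
    Nonempty ((Subgroup.closure {ωG ^ 2, ωG * φG}) ≃* QuaternionGroup 2) ∧
    (ωG * φG) ^ 2 = SemidirectProduct.inl (-1 : GL (Fin 2) Wq) ∧
    (ωG ^ 2) ^ 2 = SemidirectProduct.inl (-1 : GL (Fin 2) Wq) ∧
    (∀ g ∈ Subgroup.closure {ωG ^ 2, ωG * φG},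
      orderOf g = 2 → g = SemidirectProduct.inl (-1 : GL (Fin 2) Wq)) ∧
    (ωG ^ 2) ^ 4 = 1 ∧
    (ωG * φG) * ωG ^ 2 * (ωG * φG)⁻¹ = (ωG ^ 2)⁻¹ := by
  have hω4 : ωu ^ 4 = -1 := pow_four_eq_neg_one_of_val_eq_iw hωu hω₀
  have hω8 : ωu ^ 8 = 1 := by rw [show 8 = 4 * 2 from rfl, pow_mul, hω4, neg_one_sq]
  have hθω : θ (Multiplicative.ofAdd 1) ωu = ωu ^ 3 :=
    hθ ▸ mapEquiv_φM_of_val_eq_iw hωu hσω₀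
  have hB2 : (ωG * φG) ^ 2 = SemidirectProduct.inl (-1) := by
    rw [hωG, hφG, SemidirectProduct.inl_mul_inr_sq _ (by decide), hθω, ← pow_succ', hω4]
  have hA2 : (ωG ^ 2) ^ 2 = SemidirectProduct.inl (-1) := by
    rw [hωG, ← pow_mul, ← map_pow, hω4]
  have hA4 : (ωG ^ 2) ^ 4 = 1 := by rw [hωG, ← pow_mul, ← map_pow, hω8, map_one]
  have hAord : orderOf (ωG ^ 2) = 2 * 2 := by
    refine orderOf_eq_prime_pow (p := 2) (n := 1) (fun h => ?_) hA4
    rw [pow_one, hA2, map_eq_one_iff _ SemidirectProduct.inl_injective] at h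
    exact GL_Wq_neg_one_ne_one h
  have hconj : (ωG * φG) * ωG ^ 2 * (ωG * φG)⁻¹ = (ωG ^ 2)⁻¹ := by
    rw [hωG, hφG, ← map_pow, SemidirectProduct.inl_mul_inr_conj_inl, map_pow, hθω,
      ← map_inv, ← pow_mul, (Commute.self_pow ωu _).mul_inv_cancel,
      inv_eq_of_mul_eq_one_right (b := ωu ^ (3 * 2)) (by rw [← pow_add]; exact hω8)]
  have hB_notMem : ωG * φG ∉ Subgroup.zpowers (ωG ^ 2) := by
    rw [hωG, hφG, ← map_pow]
    exact SemidirectProduct.inl_mul_inr_notMem_zpowers_inl _ _ (by decide)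
  have hB2' := hB2.trans hA2.symm
  exact ⟨QuaternionGroup.card_closure_pair hAord hB2' hconj hB_notMem,
    ⟨QuaternionGroup.closurePairEquiv hAord hB2' hconj hB_notMem⟩, hB2, hA2,
    fun g hg hg2 => (QuaternionGroup.eq_pow_of_mem_closure_pair_of_orderOf_eq_two hAord hB2' hconj
      hB_notMem hg hg2).trans hA2, hA4, hconj⟩
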